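/- arXiv:2109.01139 — 7 statements merged into one kernel-verified Lean document; each statement's English description precedes it below -/
import Mathlib

section
/- The Reversed Boethius' Thesis (RBT), ∼(A → ∼B) → (A → B), is not valid in Approach 1: there exist a measurable space Ω, a probability measure μ, and measurable sets A, B with μ(A) > 0 such that P(Bᶜ|A) ≠ 1 and P(B|A) ≠ 1. -/
/-!
Since `μ (B ∩ A) + μ (Bᶜ ∩ A) = μ A`, both `P(B|A)` and `P(Bᶜ|A)` are below `1` as soon as `A` meets
`B` and `Bᶜ` in positive measure; a fair coin with `A = Ω` and `B = {heads}` is such a case.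
-/

open MeasureTheory

noncomputable def condP {Ω : Type*} [MeasurableSpace Ω] (μ : Measure Ω) (E H : Set Ω) : ℝ :=
  (μ (E ∩ H)).toReal / (μ H).toReal

section

variable {Ω : Type*} [MeasurableSpace Ω] {μ : Measure Ω} [IsFiniteMeasure μ] {E H : Set Ω}

theorem condP_lt_one (hE : MeasurableSet E) (hEc : μ (Eᶜ ∩ H) ≠ 0) : condP μ E H < 1 := by
  have hsplit : μ.real (E ∩ H) + μ.real (Eᶜ ∩ H) = μ.real H := by
    rw [Set.inter_comm E, ← Set.sdiff_eq_compl_inter]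
    exact measureReal_inter_add_sdiff hE
  have hEc_pos : 0 < μ.real (Eᶜ ∩ H) := ENNReal.toReal_pos hEc (measure_ne_top μ _)
  have hH_pos : 0 < μ.real H := by linarith [measureReal_nonneg (μ := μ) (s := E ∩ H)]
  rw [condP, ← measureReal_def, ← measureReal_def, div_lt_one hH_pos]
  linarith

theorem condP_compl_ne_one_and_condP_ne_one (hE : MeasurableSet E) (hE_ne : μ (E ∩ H) ≠ 0)
    (hEc_ne : μ (Eᶜ ∩ H) ≠ 0) : condP μ Eᶜ H ≠ 1 ∧ condP μ E H ≠ 1 :=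
  ⟨(condP_lt_one hE.compl (by rwa [compl_compl])).ne, (condP_lt_one hE hEc_ne).ne⟩

end

theorem PMF.toMeasure_uniformOfFintype_ne_zero {α : Type*} [Fintype α] [Nonempty α]
    [MeasurableSpace α] {s : Set α} (hs : MeasurableSet s) (hne : s.Nonempty) :
    (PMF.uniformOfFintype α).toMeasure s ≠ 0 := by
  rw [Ne, PMF.toMeasure_apply_eq_zero_iff _ hs, PMF.support_uniformOfFintype]
  simpa [Set.nonempty_iff_ne_empty] using hne

/-- The Reversed Boethius' Thesis (RBT) is not valid in Approach 1: there are a probability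
measure and measurable sets `A`, `B` with `μ A > 0` such that `P(Bᶜ|A) ≠ 1` and `P(B|A) ≠ 1`. -/
theorem reversed_boethius_thesis_not_valid_approach1 :
    ∃ (Ω : Type) (_ : MeasurableSpace Ω) (μ : Measure Ω),
      IsProbabilityMeasure μ ∧
      ∃ A B : Set Ω, MeasurableSet A ∧ MeasurableSet B ∧
        0 < μ A ∧ condP μ Bᶜ A ≠ 1 ∧ condP μ B A ≠ 1 := by
  let μ : Measure Bool := (PMF.uniformOfFintype Bool).toMeasure
  have hμ : ∀ s : Set Bool, s.Nonempty → μ s ≠ 0 := fun _ hs =>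
    PMF.toMeasure_uniformOfFintype_ne_zero .of_discrete hs
  refine ⟨Bool, inferInstance, μ, inferInstance, Set.univ, {true}, .univ, .of_discrete,
    pos_iff_ne_zero.mpr (hμ _ Set.univ_nonempty),
    condP_compl_ne_one_and_condP_ne_one .of_discrete ?_ ?_⟩
  · exact hμ _ ⟨true, by simp⟩
  · exact hμ _ ⟨false, by simp⟩
end

section
/- Fréchet–Hoeffding bounds for the conjunction of two conditional events: let μ be a probability measure on a measurable space Ω and A, H, B, K measurable sets with μ(H) > 0 and μ(K) > 0. Set x = P(A|H), y = P(B|K), and z = (μ(A∩H∩B∩K) + x·μ(Hᶜ∩B∩K) + y·μ(A∩H∩Kᶜ)) / μ(H∪K). Then max(x + y − 1, 0) ≤ z ≤ min(x, y). -/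
/-!
Put `x = P(A|H)`, `y = P(B|K)`, `D = μ(H ∪ K)` and let `N = z D` be the numerator of `z`.
Splitting `H ∪ K` along `H` gives `x D = μ(A ∩ H) + x μ(K \ H)`, and symmetrically for `y`.
Comparing atom by atom, `N ≤ x D` because `y ≤ 1`, while `(x + y - 1) D ≤ N` reduces to the
Bonferroni inequality `μ(A∩H∩K) + μ(B∩H∩K) ≤ μ(H∩K) + μ(A∩H∩B∩K)` together with `x, y ≤ 1`.
Since `z` is symmetric in `(A|H)` and `(B|K)`, the bound `z ≤ y` follows from `z ≤ x`.
-/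

open MeasureTheory

namespace MeasureTheory

variable {Ω : Type*} [MeasurableSpace Ω] {μ : Measure Ω}

theorem measureReal_add_measureReal_le_add_measureReal_inter [IsFiniteMeasure μ]
    {s t u : Set Ω} (ht : MeasurableSet t) (hu : s ∪ t ⊆ u) :
    μ.real s + μ.real t ≤ μ.real u + μ.real (s ∩ t) := by
  rw [← measureReal_union_add_inter ht]
  exact add_le_add_left (measureReal_mono hu) _

end MeasureTheory

section

variable {Ω : Type*} [MeasurableSpace Ω] {μ : Measure Ω}

theorem condP_nonneg (E H : Set Ω) : 0 ≤ condP μ E H := by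
  unfold condP
  positivity

theorem condP_le_one [IsFiniteMeasure μ] (E H : Set Ω) : condP μ E H ≤ 1 :=
  div_le_one_of_le₀ (measureReal_mono Set.inter_subset_right) measureReal_nonneg

-- Also for `μ H = 0`, where `condP μ E H = 0` is a junk value.
theorem condP_mul_measureReal [IsFiniteMeasure μ] (E H : Set Ω) :
    condP μ E H * μ.real H = μ.real (E ∩ H) := by
  rcases eq_or_ne (μ.real H) 0 with hH | hH
  · rw [hH, mul_zero, measureReal_mono_null Set.inter_subset_right hH]
  · exact div_mul_cancel₀ _ hH

theorem condP_mul_measureReal_union [IsFiniteMeasure μ] {H : Set Ω} (hH : MeasurableSet H)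
    (E K : Set Ω) :
    condP μ E H * μ.real (H ∪ K) = μ.real (E ∩ H) + condP μ E H * μ.real (K \ H) := by
  rw [← measureReal_add_sdiff hH, mul_add, condP_mul_measureReal]

noncomputable def conjunctionPrevision (μ : Measure Ω) (A H B K : Set Ω) : ℝ :=
  (μ.real (A ∩ H ∩ B ∩ K) + condP μ A H * μ.real (Hᶜ ∩ B ∩ K)
    + condP μ B K * μ.real (A ∩ H ∩ Kᶜ)) / μ.real (H ∪ K)

theorem conjunctionPrevision_comm (A H B K : Set Ω) :
    conjunctionPrevision μ A H B K = conjunctionPrevision μ B K A H := by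
  have hAB : A ∩ H ∩ B ∩ K = B ∩ K ∩ A ∩ H := by grind
  have hHc : Hᶜ ∩ B ∩ K = B ∩ K ∩ Hᶜ := by grind
  have hKc : A ∩ H ∩ Kᶜ = Kᶜ ∩ A ∩ H := by grind
  rw [conjunctionPrevision, conjunctionPrevision, hAB, hHc, hKc, Set.union_comm]
  ring

theorem conjunctionPrevision_nonneg (A H B K : Set Ω) : 0 ≤ conjunctionPrevision μ A H B K := by
  have := condP_nonneg (μ := μ) A H
  have := condP_nonneg (μ := μ) B K
  unfold conjunctionPrevision
  positivity

variable [IsFiniteMeasure μ]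

theorem conjunctionPrevision_le_condP_left {H K : Set Ω} (hH : MeasurableSet H)
    (hK : MeasurableSet K) (A B : Set Ω) :
    conjunctionPrevision μ A H B K ≤ condP μ A H := by
  set x := condP μ A H
  set y := condP μ B K
  have hAH : μ.real (A ∩ H ∩ K) + μ.real (A ∩ H ∩ Kᶜ) = μ.real (A ∩ H) :=
    measureReal_inter_add_sdiff hK
  have hp : μ.real (A ∩ H ∩ B ∩ K) ≤ μ.real (A ∩ H ∩ K) := measureReal_mono (by grind)
  have hq : μ.real (Hᶜ ∩ B ∩ K) ≤ μ.real (K \ H) := measureReal_mono (by grind)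
  have hyr : y * μ.real (A ∩ H ∩ Kᶜ) ≤ μ.real (A ∩ H ∩ Kᶜ) :=
    mul_le_of_le_one_left measureReal_nonneg (condP_le_one B K)
  have hxq : x * μ.real (Hᶜ ∩ B ∩ K) ≤ x * μ.real (K \ H) :=
    mul_le_mul_of_nonneg_left hq (condP_nonneg A H)
  refine div_le_of_le_mul₀ measureReal_nonneg (condP_nonneg A H) ?_
  rw [condP_mul_measureReal_union hH]
  linarith

theorem conjunctionPrevision_le_condP_right {H K : Set Ω} (hH : MeasurableSet H)
    (hK : MeasurableSet K) (A B : Set Ω) :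
    conjunctionPrevision μ A H B K ≤ condP μ B K :=
  conjunctionPrevision_comm (μ := μ) A H B K ▸ conjunctionPrevision_le_condP_left hK hH B A

theorem condP_add_condP_sub_one_le_conjunctionPrevision {A H K : Set Ω} (hA : MeasurableSet A)
    (hH : MeasurableSet H) (hK : MeasurableSet K) (hHK : μ (H ∪ K) ≠ 0) (B : Set Ω) :
    condP μ A H + condP μ B K - 1 ≤ conjunctionPrevision μ A H B K := by
  set x := condP μ A H
  set y := condP μ B K
  have hxD : x * μ.real (H ∪ K) = μ.real (A ∩ H) + x * μ.real (K \ H) :=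
    condP_mul_measureReal_union hH A K
  have hyD : y * μ.real (H ∪ K) = μ.real (B ∩ K) + y * μ.real (H \ K) := by
    rw [Set.union_comm]
    exact condP_mul_measureReal_union hK B H
  have hD : μ.real (H ∩ K) + μ.real (H \ K) + μ.real (K \ H) = μ.real (H ∪ K) := by
    rw [measureReal_inter_add_sdiff hK, measureReal_add_sdiff hH]
  have hAH : μ.real (A ∩ H ∩ K) + μ.real (A ∩ H ∩ Kᶜ) = μ.real (A ∩ H) :=
    measureReal_inter_add_sdiff hK
  have hBK : μ.real (B ∩ K ∩ H) + μ.real (Hᶜ ∩ B ∩ K) = μ.real (B ∩ K) := by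
    rw [← measureReal_inter_add_sdiff hH (s := B ∩ K)]
    congr 2
    grind
  have hBonferroni : μ.real (B ∩ K ∩ H) + μ.real (A ∩ H ∩ K)
      ≤ μ.real (H ∩ K) + μ.real (A ∩ H ∩ B ∩ K) := by
    have hinter : B ∩ K ∩ H ∩ (A ∩ H ∩ K) = A ∩ H ∩ B ∩ K := by grind
    rw [← hinter]
    exact measureReal_add_measureReal_le_add_measureReal_inter ((hA.inter hH).inter hK)
      (by grind)
  have hq : μ.real (Hᶜ ∩ B ∩ K) ≤ μ.real (K \ H) := measureReal_mono (by grind)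
  have hr : μ.real (A ∩ H ∩ Kᶜ) ≤ μ.real (H \ K) := measureReal_mono (by grind)
  have hxq : 0 ≤ (1 - x) * (μ.real (K \ H) - μ.real (Hᶜ ∩ B ∩ K)) :=
    mul_nonneg (sub_nonneg.mpr (condP_le_one A H)) (sub_nonneg.mpr hq)
  have hyr : 0 ≤ (1 - y) * (μ.real (H \ K) - μ.real (A ∩ H ∩ Kᶜ)) :=
    mul_nonneg (sub_nonneg.mpr (condP_le_one B K)) (sub_nonneg.mpr hr)
  have hDpos : 0 < μ.real (H ∪ K) := ENNReal.toReal_pos hHK (measure_ne_top μ _)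
  rw [conjunctionPrevision, le_div_iff₀ hDpos]
  linarith

end

theorem frechet_hoeffding_bounds_conjunction_general
    {Ω : Type*} [MeasurableSpace Ω] (μ : Measure Ω) [IsProbabilityMeasure μ]
    (A H B K : Set Ω) (hA : MeasurableSet A) (hH : MeasurableSet H)
    (hK : MeasurableSet K)
    (hHpos : 0 < μ H)
    (x y z : ℝ) (hx : x = condP μ A H) (hy : y = condP μ B K)
    (hz : z = ((μ (A ∩ H ∩ B ∩ K)).toReal + x * (μ (Hᶜ ∩ B ∩ K)).toReal
        + y * (μ (A ∩ H ∩ Kᶜ)).toReal) / (μ (H ∪ K)).toReal) :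
    max (x + y - 1) 0 ≤ z ∧ z ≤ min x y := by
  subst hx hy
  replace hz : z = conjunctionPrevision μ A H B K := hz
  have hHK : μ (H ∪ K) ≠ 0 := (hHpos.trans_le (measure_mono Set.subset_union_left)).ne'
  rw [hz]
  exact ⟨max_le (condP_add_condP_sub_one_le_conjunctionPrevision hA hH hK hHK B)
      (conjunctionPrevision_nonneg A H B K),
    le_min (conjunctionPrevision_le_condP_left hH hK A B)
      (conjunctionPrevision_le_condP_right hH hK A B)⟩

/-- Fréchet–Hoeffding bounds for the prevision `z` of the conjunction
`(A|H) ∧ (B|K)`: `max(x + y − 1, 0) ≤ z ≤ min(x, y)`, where `x = P(A|H)`,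
`y = P(B|K)` and `z = (μ(A∩H∩B∩K) + x·μ(Hᶜ∩B∩K) + y·μ(A∩H∩Kᶜ)) / μ(H∪K)`. -/
theorem frechet_hoeffding_bounds_conjunction
    {Ω : Type*} [MeasurableSpace Ω] (μ : Measure Ω) [IsProbabilityMeasure μ]
    (A H B K : Set Ω) (hA : MeasurableSet A) (hH : MeasurableSet H)
    (hB : MeasurableSet B) (hK : MeasurableSet K)
    (hHpos : 0 < μ H) (hKpos : 0 < μ K)
    (x y z : ℝ) (hx : x = condP μ A H) (hy : y = condP μ B K)
    (hz : z = ((μ (A ∩ H ∩ B ∩ K)).toReal + x * (μ (Hᶜ ∩ B ∩ K)).toReal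
        + y * (μ (A ∩ H ∩ Kᶜ)).toReal) / (μ (H ∪ K)).toReal) :
    max (x + y - 1) 0 ≤ z ∧ z ≤ min x y :=
  frechet_hoeffding_bounds_conjunction_general μ A H B K hA hH hK hHpos x y z hx hy hz
end

section
/- Conjunction with a common conditioning event reduces to the conditional event of the intersection: let μ be a probability measure on a measurable space Ω and A, B, H measurable with μ(H) > 0, x = P(A|H), y = P(B|H). Then the prevision z = (μ(A∩H∩B∩H) + x·μ(Hᶜ∩B∩H) + y·μ(A∩H∩Hᶜ)) / μ(H∪H) equals P(A∩B|H), and the conjunction random quantity (A|H) ∧ (B|H) coincides pointwise with the indicator 1_{A∩B∩H} + P(A∩B|H)·1_{Hᶜ} of the conditional event (A∩B)|H. -/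
open MeasureTheory

/-- Conjunction with a common conditioning event reduces to the conditional event of
the intersection: with `x = P(A|H)`, `y = P(B|H)`, the prevision
`z = (μ(A∩H∩B∩H) + x·μ(Hᶜ∩B∩H) + y·μ(A∩H∩Hᶜ)) / μ(H∪H)` equals `P(A∩B|H)`, and the
conjunction random quantity `(A|H) ∧ (B|H)` coincides pointwise with the indicator
`1_{A∩B∩H} + P(A∩B|H)·1_{Hᶜ}` of the conditional event `(A∩B)|H`. -/
theorem conjunction_common_conditioning_event
    {Ω : Type*} [MeasurableSpace Ω] (μ : Measure Ω) [IsProbabilityMeasure μ]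
    (A B H : Set Ω) (hA : MeasurableSet A) (hB : MeasurableSet B)
    (hH : MeasurableSet H) (hHpos : 0 < μ H)
    (x y z : ℝ) (hx : x = condP μ A H) (hy : y = condP μ B H)
    (hz : z = ((μ (A ∩ H ∩ B ∩ H)).toReal + x * (μ (Hᶜ ∩ B ∩ H)).toReal
        + y * (μ (A ∩ H ∩ Hᶜ)).toReal) / (μ (H ∪ H)).toReal) :
    z = condP μ (A ∩ B) H ∧
    ∀ ω : Ω,
      ((A ∩ H ∩ B ∩ H).indicator (1 : Ω → ℝ) ω
        + x * (Hᶜ ∩ B ∩ H).indicator (1 : Ω → ℝ) ω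
        + y * (A ∩ H ∩ Hᶜ).indicator (1 : Ω → ℝ) ω
        + z * (Hᶜ ∩ Hᶜ).indicator (1 : Ω → ℝ) ω)
      = (A ∩ B ∩ H).indicator (1 : Ω → ℝ) ω
        + condP μ (A ∩ B) H * Hᶜ.indicator (1 : Ω → ℝ) ω := by
  have h1 : A ∩ H ∩ B ∩ H = A ∩ B ∩ H := by ext ω; simp [Set.mem_inter_iff]; tauto
  have h2 : Hᶜ ∩ B ∩ H = (∅ : Set Ω) := by ext ω; simp [Set.mem_inter_iff]; tauto
  have h3 : A ∩ H ∩ Hᶜ = (∅ : Set Ω) := by ext ω; simp [Set.mem_inter_iff]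
  have h4 : H ∪ H = H := Set.union_self H
  have h5 : Hᶜ ∩ Hᶜ = Hᶜ := Set.inter_self _
  have hzeq : z = condP μ (A ∩ B) H := by
    rw [hz, h1, h2, h3, h4]; simp [condP]
  refine ⟨hzeq, fun ω => ?_⟩
  rw [h1, h2, h3, h5, hzeq]
  simp
end

section
/- Abelard's First Principle (AB) is valid in Approach 2: for every probability measure μ on a measurable space Ω and all measurable sets A, B with μ(A) > 0, the conjunction (B|A) ∧ (Bᶜ|A) is the identically zero random variable (its prevision is P(B∩Bᶜ|A) = 0 and all the sets on which it takes a nonzero value are empty), and hence its negation 1 − (B|A) ∧ (Bᶜ|A) is identically equal to 1. -/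
open MeasureTheory

/-- Abelard's First Principle (AB) is valid in Approach 2: the conjunction
`(B|A) ∧ (Bᶜ|A)` is the identically zero random variable — its prevision is
`P(B ∩ Bᶜ | A) = 0` and all the sets on which it takes a nonzero value are empty —
and hence its negation `1 − (B|A) ∧ (Bᶜ|A)` is identically equal to `1`. -/
theorem abelards_first_principle_approach2
    {Ω : Type*} [MeasurableSpace Ω] (μ : Measure Ω) [IsProbabilityMeasure μ]
    (A B : Set Ω) (hA : MeasurableSet A) (hB : MeasurableSet B) (hApos : 0 < μ A) :
    condP μ (B ∩ Bᶜ) A = 0 ∧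
    B ∩ A ∩ Bᶜ ∩ A = ∅ ∧
    Aᶜ ∩ Bᶜ ∩ A = ∅ ∧
    B ∩ A ∩ Aᶜ = ∅ ∧
    (∀ ω : Ω,
      ((B ∩ A ∩ Bᶜ ∩ A).indicator (1 : Ω → ℝ) ω
        + condP μ B A * (Aᶜ ∩ Bᶜ ∩ A).indicator (1 : Ω → ℝ) ω
        + condP μ Bᶜ A * (B ∩ A ∩ Aᶜ).indicator (1 : Ω → ℝ) ω
        + condP μ (B ∩ Bᶜ) A * (Aᶜ ∩ Aᶜ).indicator (1 : Ω → ℝ) ω) = 0) ∧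
    (∀ ω : Ω,
      1 - ((B ∩ A ∩ Bᶜ ∩ A).indicator (1 : Ω → ℝ) ω
        + condP μ B A * (Aᶜ ∩ Bᶜ ∩ A).indicator (1 : Ω → ℝ) ω
        + condP μ Bᶜ A * (B ∩ A ∩ Aᶜ).indicator (1 : Ω → ℝ) ω
        + condP μ (B ∩ Bᶜ) A * (Aᶜ ∩ Aᶜ).indicator (1 : Ω → ℝ) ω) = 1) := by
  have h0 : condP μ (B ∩ Bᶜ) A = 0 := by
    simp [condP]
  have h1 : B ∩ A ∩ Bᶜ ∩ A = ∅ := by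
    ext ω; simp; try tauto
  have h2 : Aᶜ ∩ Bᶜ ∩ A = ∅ := by
    ext ω; simp; try tauto
  have h3 : B ∩ A ∩ Aᶜ = ∅ := by
    ext ω; simp; try tauto
  have h4 : ∀ ω : Ω,
      ((B ∩ A ∩ Bᶜ ∩ A).indicator (1 : Ω → ℝ) ω
        + condP μ B A * (Aᶜ ∩ Bᶜ ∩ A).indicator (1 : Ω → ℝ) ω
        + condP μ Bᶜ A * (B ∩ A ∩ Aᶜ).indicator (1 : Ω → ℝ) ω
        + condP μ (B ∩ Bᶜ) A * (Aᶜ ∩ Aᶜ).indicator (1 : Ω → ℝ) ω) = 0 := by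
    intro ω; rw [h0, h1, h2, h3]; simp
  exact ⟨h0, h1, h2, h3, h4, fun ω => by rw [h4 ω]; ring⟩
end

section
/- The prevision of the conjunction (B|A) ∧ (B|Aᶜ) is the product of the two conditional probabilities: for every probability measure μ on a measurable space Ω and all measurable sets A, B with μ(A) > 0 and μ(Aᶜ) > 0, setting x = P(B|A) and y = P(B|Aᶜ), one has ∫ (y·1_{A∩B} + x·1_{Aᶜ∩B}) dμ = x·y, and consequently ∫ (1 − (y·1_{A∩B} + x·1_{Aᶜ∩B})) dμ = 1 − x·y. -/
/-! Since `μ (A ∩ B) = x μ A` and `μ (Aᶜ ∩ B) = y μ Aᶜ`, the prevision is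
`y x μ A + x y μ Aᶜ = x y`. -/

open MeasureTheory

section

variable {Ω : Type*} [MeasurableSpace Ω] {μ : Measure Ω}

theorem integrable_indicator_one [IsFiniteMeasure μ] {s : Set Ω} (hs : MeasurableSet s) :
    Integrable (s.indicator (1 : Ω → ℝ)) μ :=
  (integrable_const 1).indicator hs

theorem integrable_mul_indicator_add_mul_indicator [IsFiniteMeasure μ] {s t : Set Ω}
    (hs : MeasurableSet s) (ht : MeasurableSet t) (a b : ℝ) :
    Integrable (fun ω ↦ a * s.indicator 1 ω + b * t.indicator 1 ω) μ :=
  ((integrable_indicator_one hs).const_mul a).add ((integrable_indicator_one ht).const_mul b)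

theorem integral_one_sub [IsProbabilityMeasure μ] {f : Ω → ℝ} (hf : Integrable f μ) :
    ∫ ω, (1 - f ω) ∂μ = 1 - ∫ ω, f ω ∂μ := by
  rw [integral_sub (integrable_const 1) hf, integral_const, probReal_univ, one_smul]

theorem integral_mul_indicator_add_mul_indicator [IsFiniteMeasure μ] {s t : Set Ω}
    (hs : MeasurableSet s) (ht : MeasurableSet t) (a b : ℝ) :
    ∫ ω, (a * s.indicator 1 ω + b * t.indicator 1 ω) ∂μ = a * μ.real s + b * μ.real t := by
  rw [integral_add ((integrable_indicator_one hs).const_mul a)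
      ((integrable_indicator_one ht).const_mul b),
    integral_const_mul, integral_const_mul, integral_indicator_one hs, integral_indicator_one ht]

end

theorem prevision_conjunction_B_given_A_and_B_given_not_A_general
    {Ω : Type*} [MeasurableSpace Ω] (μ : Measure Ω) [IsProbabilityMeasure μ]
    (A B : Set Ω) (hA : MeasurableSet A) (hB : MeasurableSet B)
    (x y : ℝ) (hx : x = condP μ B A) (hy : y = condP μ B Aᶜ) :
    (∫ ω, (y * (A ∩ B).indicator (1 : Ω → ℝ) ω
        + x * (Aᶜ ∩ B).indicator (1 : Ω → ℝ) ω) ∂μ) = x * y ∧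
    (∫ ω, (1 - (y * (A ∩ B).indicator (1 : Ω → ℝ) ω
        + x * (Aᶜ ∩ B).indicator (1 : Ω → ℝ) ω)) ∂μ) = 1 - x * y := by
  have hAB : μ.real (A ∩ B) = x * μ.real A := by
    rw [Set.inter_comm, ← condP_mul_measureReal, hx]
  have hAcB : μ.real (Aᶜ ∩ B) = y * μ.real Aᶜ := by
    rw [Set.inter_comm, ← condP_mul_measureReal, hy]
  have hprevision : ∫ ω, (y * (A ∩ B).indicator (1 : Ω → ℝ) ω
      + x * (Aᶜ ∩ B).indicator (1 : Ω → ℝ) ω) ∂μ = x * y := by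
    rw [integral_mul_indicator_add_mul_indicator (hA.inter hB) (hA.compl.inter hB), hAB, hAcB]
    linear_combination x * y * probReal_add_probReal_compl (μ := μ) hA
  refine ⟨hprevision, ?_⟩
  rw [integral_one_sub
    (integrable_mul_indicator_add_mul_indicator (hA.inter hB) (hA.compl.inter hB) y x), hprevision]

/-- The prevision of the conjunction `(B|A) ∧ (B|Aᶜ)` is the product of the two
conditional probabilities: with `x = P(B|A)` and `y = P(B|Aᶜ)`,
`∫ (y·1_{A∩B} + x·1_{Aᶜ∩B}) dμ = x·y`, and hence the prevision of its negation is `1 − x·y`. -/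
theorem prevision_conjunction_B_given_A_and_B_given_not_A
    {Ω : Type*} [MeasurableSpace Ω] (μ : Measure Ω) [IsProbabilityMeasure μ]
    (A B : Set Ω) (hA : MeasurableSet A) (hB : MeasurableSet B)
    (hApos : 0 < μ A) (hAcpos : 0 < μ Aᶜ)
    (x y : ℝ) (hx : x = condP μ B A) (hy : y = condP μ B Aᶜ) :
    (∫ ω, (y * (A ∩ B).indicator (1 : Ω → ℝ) ω
        + x * (Aᶜ ∩ B).indicator (1 : Ω → ℝ) ω) ∂μ) = x * y ∧
    (∫ ω, (1 - (y * (A ∩ B).indicator (1 : Ω → ℝ) ω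
        + x * (Aᶜ ∩ B).indicator (1 : Ω → ℝ) ω)) ∂μ) = 1 - x * y :=
  prevision_conjunction_B_given_A_and_B_given_not_A_general μ A B hA hB x y hx hy
end

section
/- Aristotle's Second Thesis (AS) is not valid in Approach 2: there exist a measurable space Ω, a probability measure μ, and measurable sets A, B with μ(A) > 0 and μ(Aᶜ) > 0 such that, setting x = P(B|A) and y = P(B|Aᶜ), the random quantity 1 − (y·1_{A∩B} + x·1_{Aᶜ∩B}) is not identically equal to 1 (indeed there are points of Ω where it takes the value 1 and points where it takes the value 0). -/
open MeasureTheory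

noncomputable def μ3 : Measure (Fin 3) := (3 : ENNReal)⁻¹ • Measure.count

lemma μ3_finset (s : Finset (Fin 3)) : μ3 ↑s = s.card / 3 := by
  rw [μ3, Measure.smul_apply, Measure.count_apply_finset, smul_eq_mul,
    ENNReal.div_eq_inv_mul]

/-- Aristotle's Second Thesis (AS) is not valid in Approach 2: there are a probability
measure and measurable sets `A`, `B` with `μ A > 0`, `μ Aᶜ > 0` such that, with
`x = P(B|A)` and `y = P(B|Aᶜ)`, the negated conjunction
`1 − (y·1_{A∩B} + x·1_{Aᶜ∩B})` is not constantly `1`: it takes the value `1` at some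
point and the value `0` at some other point. -/
theorem aristotles_second_thesis_not_valid_approach2 :
    ∃ (Ω : Type) (_ : MeasurableSpace Ω) (μ : Measure Ω),
      IsProbabilityMeasure μ ∧
      ∃ A B : Set Ω, MeasurableSet A ∧ MeasurableSet B ∧
        0 < μ A ∧ 0 < μ Aᶜ ∧
        (∃ ω : Ω, 1 - (condP μ B Aᶜ * (A ∩ B).indicator (1 : Ω → ℝ) ω
            + condP μ B A * (Aᶜ ∩ B).indicator (1 : Ω → ℝ) ω) = 1) ∧
        (∃ ω : Ω, 1 - (condP μ B Aᶜ * (A ∩ B).indicator (1 : Ω → ℝ) ω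
            + condP μ B A * (Aᶜ ∩ B).indicator (1 : Ω → ℝ) ω) = 0) := by
  refine ⟨Fin 3, ⊤, μ3, ?_, {0,1}, {1,2}, trivial, trivial, ?_, ?_, ⟨0, ?_⟩, ⟨1, ?_⟩⟩
  · constructor
    have : (Set.univ : Set (Fin 3)) = ↑(Finset.univ : Finset (Fin 3)) := by simp
    rw [this, μ3_finset]
    simp
    rw [ENNReal.div_self] <;> simp
  · have : ({0,1} : Set (Fin 3)) = ↑({0,1} : Finset (Fin 3)) := by simp
    rw [this, μ3_finset]
    simp
  · have : ({0,1} : Set (Fin 3))ᶜ = ↑({2} : Finset (Fin 3)) := by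
      ext x; fin_cases x <;> simp
    rw [this, μ3_finset]
    simp
  · have h3 : (0 : Fin 3) ∉ ({0,1} : Set (Fin 3)) ∩ {1,2} := by
      simp
    have h4 : (0 : Fin 3) ∉ ({0,1} : Set (Fin 3))ᶜ ∩ {1,2} := by
      simp
    rw [Set.indicator_of_notMem h3, Set.indicator_of_notMem h4]
    ring
  · have h1 : ({1,2} : Set (Fin 3)) ∩ ({0,1} : Set (Fin 3))ᶜ = ↑({2} : Finset (Fin 3)) := by
      ext x; fin_cases x <;> simp
    have h2 : ({0,1} : Set (Fin 3))ᶜ = ↑({2} : Finset (Fin 3)) := by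
      ext x; fin_cases x <;> simp
    have h3 : (1 : Fin 3) ∈ ({0,1} : Set (Fin 3)) ∩ {1,2} := by simp
    have h4 : (1 : Fin 3) ∉ ({0,1} : Set (Fin 3))ᶜ ∩ {1,2} := by simp
    rw [Set.indicator_of_mem h3, Set.indicator_of_notMem h4]
    show 1 - (condP μ3 {1,2} ({0,1} : Set (Fin 3))ᶜ * 1 + condP μ3 {1,2} {0,1} * 0) = 0
    have hc : condP μ3 {1,2} ({0,1} : Set (Fin 3))ᶜ = 1 := by
      rw [condP, h1, h2, μ3_finset, ENNReal.toReal_div]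
      norm_num
    rw [hc]; ring
end

section
/- Boethius Variation (B3) is not valid in Approach 2: let Ω be a set, A, B ⊆ Ω, and x, y, m real numbers. The random quantity Z = y·1_{A∩B} + x·1_{Aᶜ∩Bᶜ} + m·(1 − (1_{A∩B} + x·1_{Aᶜ})) takes the value y on A∩B, m on A∩Bᶜ, m·(1 − x) on Aᶜ∩B, and x + m·(1 − x) on Aᶜ∩Bᶜ; in particular, if x = y = 1 and Aᶜ∩B ≠ ∅, then Z takes the value 0 at every point of Aᶜ∩B and hence is not identically equal to 1. -/
/-- Boethius Variation (B3) is not valid in Approach 2: the iterated conditional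
`(Bᶜ|Aᶜ)|(B|A)`, i.e. the random quantity
`Z = y·1_{A∩B} + x·1_{Aᶜ∩Bᶜ} + m·(1 − (1_{A∩B} + x·1_{Aᶜ}))`, takes the value `y` on
`A∩B`, `m` on `A∩Bᶜ`, `m·(1 − x)` on `Aᶜ∩B`, and `x + m·(1 − x)` on `Aᶜ∩Bᶜ`; in
particular, if `x = y = 1` and `Aᶜ∩B ≠ ∅`, then `Z` is `0` on `Aᶜ∩B` and hence not
identically `1`. -/
theorem boethius_variation_B3_not_valid_approach2
    {Ω : Type*} (A B : Set Ω) (x y m : ℝ)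
    (Z : Ω → ℝ)
    (hZ : Z = fun ω => y * (A ∩ B).indicator (1 : Ω → ℝ) ω
        + x * (Aᶜ ∩ Bᶜ).indicator (1 : Ω → ℝ) ω
        + m * (1 - ((A ∩ B).indicator (1 : Ω → ℝ) ω + x * Aᶜ.indicator (1 : Ω → ℝ) ω))) :
    (∀ ω ∈ A ∩ B, Z ω = y) ∧
    (∀ ω ∈ A ∩ Bᶜ, Z ω = m) ∧
    (∀ ω ∈ Aᶜ ∩ B, Z ω = m * (1 - x)) ∧
    (∀ ω ∈ Aᶜ ∩ Bᶜ, Z ω = x + m * (1 - x)) ∧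
    (x = 1 → y = 1 → (Aᶜ ∩ B).Nonempty →
      (∀ ω ∈ Aᶜ ∩ B, Z ω = 0) ∧ ¬(∀ ω : Ω, Z ω = 1)) := by
  subst hZ
  have h1 : ∀ ω ∈ A ∩ B,
      (fun ω => y * (A ∩ B).indicator (1 : Ω → ℝ) ω
        + x * (Aᶜ ∩ Bᶜ).indicator (1 : Ω → ℝ) ω
        + m * (1 - ((A ∩ B).indicator (1 : Ω → ℝ) ω + x * Aᶜ.indicator (1 : Ω → ℝ) ω))) ω = y := by
    rintro ω ⟨hA, hB⟩
    simp [Set.indicator_apply, hA, hB, Set.mem_inter_iff, Set.mem_compl_iff]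
  have h2 : ∀ ω ∈ A ∩ Bᶜ,
      (fun ω => y * (A ∩ B).indicator (1 : Ω → ℝ) ω
        + x * (Aᶜ ∩ Bᶜ).indicator (1 : Ω → ℝ) ω
        + m * (1 - ((A ∩ B).indicator (1 : Ω → ℝ) ω + x * Aᶜ.indicator (1 : Ω → ℝ) ω))) ω = m := by
    rintro ω ⟨hA, hB⟩
    simp only [Set.mem_compl_iff] at hB
    simp [Set.indicator_apply, hA, hB, Set.mem_inter_iff, Set.mem_compl_iff]
  have h3 : ∀ ω ∈ Aᶜ ∩ B,
      (fun ω => y * (A ∩ B).indicator (1 : Ω → ℝ) ω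
        + x * (Aᶜ ∩ Bᶜ).indicator (1 : Ω → ℝ) ω
        + m * (1 - ((A ∩ B).indicator (1 : Ω → ℝ) ω + x * Aᶜ.indicator (1 : Ω → ℝ) ω))) ω
        = m * (1 - x) := by
    rintro ω ⟨hA, hB⟩
    simp only [Set.mem_compl_iff] at hA
    simp [Set.indicator_apply, hA, hB, Set.mem_inter_iff, Set.mem_compl_iff]
  have h4 : ∀ ω ∈ Aᶜ ∩ Bᶜ,
      (fun ω => y * (A ∩ B).indicator (1 : Ω → ℝ) ω
        + x * (Aᶜ ∩ Bᶜ).indicator (1 : Ω → ℝ) ω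
        + m * (1 - ((A ∩ B).indicator (1 : Ω → ℝ) ω + x * Aᶜ.indicator (1 : Ω → ℝ) ω))) ω
        = x + m * (1 - x) := by
    rintro ω ⟨hA, hB⟩
    simp only [Set.mem_compl_iff] at hA hB
    simp [Set.indicator_apply, hA, hB, Set.mem_inter_iff, Set.mem_compl_iff]
  refine ⟨h1, h2, h3, h4, ?_⟩
  rintro hx hy ⟨ω₀, hω₀⟩
  constructor
  · intro ω hω
    rw [h3 ω hω, hx]; ring
  · intro hall
    have := hall ω₀
    rw [h3 ω₀ hω₀, hx] at this
    norm_num at this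
end
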